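/- If T: V → A is a super O-operator of an alternative superalgebra (A, ⋆) with respect to a bimodule (V, l, r), then T is a super O-operator of the associated Malcev superalgebra (A, [·,·]) with respect to the representation given by (l − (−1)^{|·||·|} r). -/
import Mathlib


open scoped TensorProduct

/-- The super sign `(-1)^{ij}` for parities `i j : ZMod 2`. -/
def sgn (K : Type*) [Field K] (i j : ZMod 2) : K := (-1 : K) ^ (i * j).val

/-- `br` is the supercommutator of the product `mul` on homogeneous elements:
`[x,y] = x·y - (-1)^{|x||y|} y·x`. -/
def SuperComm {K A : Type*} [Field K] [AddCommGroup A] [Module K A]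
    (G : ZMod 2 → Submodule K A) (mul br : A →ₗ[K] A →ₗ[K] A) : Prop :=
  ∀ i j, ∀ x ∈ G i, ∀ y ∈ G j, br x y = mul x y - sgn K i j • mul y x

/-- `(A, mul)` with grading `G` is an alternative superalgebra. -/
def IsAltSuper {K A : Type*} [Field K] [AddCommGroup A] [Module K A]
    (G : ZMod 2 → Submodule K A) (mul : A →ₗ[K] A →ₗ[K] A) : Prop :=
  (∀ i j, ∀ x ∈ G i, ∀ y ∈ G j, mul x y ∈ G (i + j)) ∧
  (∀ i j k, ∀ x ∈ G i, ∀ y ∈ G j, ∀ z ∈ G k,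
    (mul (mul x y) z - mul x (mul y z))
      + sgn K i j • (mul (mul y x) z - mul y (mul x z)) = 0) ∧
  (∀ i j k, ∀ x ∈ G i, ∀ y ∈ G j, ∀ z ∈ G k,
    (mul (mul x y) z - mul x (mul y z))
      + sgn K j k • (mul (mul x z) y - mul x (mul z y)) = 0)

/-- `(V, ml, mr)` is a bimodule over the alternative superalgebra `(A, mul)`. -/
def IsAltBimod {K A V : Type*} [Field K] [AddCommGroup A] [Module K A]
    [AddCommGroup V] [Module K V]
    (G : ZMod 2 → Submodule K A) (mul : A →ₗ[K] A →ₗ[K] A)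
    (GV : ZMod 2 → Submodule K V) (ml mr : A →ₗ[K] Module.End K V) : Prop :=
  (∀ i j, ∀ x ∈ G i, ∀ v ∈ GV j, ml x v ∈ GV (i + j)) ∧
  (∀ i j, ∀ x ∈ G i, ∀ v ∈ GV j, mr x v ∈ GV (i + j)) ∧
  (∀ i j, ∀ x ∈ G i, ∀ y ∈ G j,
    ml (mul x y) + sgn K i j • ml (mul y x)
      = ml x * ml y + sgn K i j • (ml y * ml x)) ∧
  (∀ i j, ∀ x ∈ G i, ∀ y ∈ G j,
    mr y * mr x + sgn K i j • (mr x * mr y)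
      = mr (mul x y) + sgn K i j • mr (mul y x)) ∧
  (∀ i j, ∀ x ∈ G i, ∀ y ∈ G j,
    mr y * mr x + sgn K i j • (mr y * ml x)
      - sgn K i j • (ml x * mr y) - mr (mul x y) = 0) ∧
  (∀ i j, ∀ x ∈ G i, ∀ y ∈ G j,
    mr y * ml x + sgn K i j • ml (mul x y)
      - sgn K i j • (ml x * ml y) - ml x * mr y = 0)

/-- a super O-operator of an alternative superalgebra w.r.t. a
bimodule is a super O-operator of the associated Malcev superalgebra w.r.t.
the representation `l - (-1)^{|·||·|} r`. -/
theorem stmt5 {K A V : Type*} [Field K] [AddCommGroup A] [Module K A]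
    [AddCommGroup V] [Module K V]
    (G : ZMod 2 → Submodule K A) (mul br : A →ₗ[K] A →ₗ[K] A)
    (halt : IsAltSuper G mul) (hbr : SuperComm G mul br)
    (GV : ZMod 2 → Submodule K V) (ml mr : A →ₗ[K] Module.End K V)
    (hbim : IsAltBimod G mul GV ml mr)
    (ρ : A →ₗ[K] Module.End K V)
    (hρ : ∀ i j, ∀ x ∈ G i, ∀ v ∈ GV j, ρ x v = ml x v - sgn K i j • mr x v)
    (T : V →ₗ[K] A) (hTeven : ∀ i, ∀ v ∈ GV i, T v ∈ G i)
    (hT : ∀ i j, ∀ a ∈ GV i, ∀ b ∈ GV j,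
      mul (T a) (T b) = T (ml (T a) b + mr (T b) a)) :
    ∀ i j, ∀ a ∈ GV i, ∀ b ∈ GV j,
      br (T a) (T b) = T (ρ (T a) b - sgn K i j • ρ (T b) a) := by
  intro i j a ha b hb
  have hTa := hTeven i a ha
  have hTb := hTeven j b hb
  have hsq : sgn K i j * sgn K i j = 1 := by
    simp [sgn, ← pow_add, ← two_mul, pow_mul]
  have hsym : sgn K j i = sgn K i j := by simp [sgn, mul_comm]
  rw [hbr i j (T a) hTa (T b) hTb, hT i j a ha b hb, hT j i b hb a ha,
    hρ i j (T a) hTa b hb, hρ j i (T b) hTb a ha, hsym]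
  simp only [map_add, map_sub, map_smul, smul_sub, smul_add, smul_smul, hsq, one_smul]
  abel
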